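/- The function f is not differentiable at t = 16/3, but f is differentiable at t = 4/3 and differentiable at t = 64/3. -/

import Mathlib

/-- The inverse hyperbolic tangent. -/
noncomputable def artanh (x : ℝ) : ℝ := (1 / 2) * Real.log ((1 + x) / (1 - x))

/-- `θ(t) = artanh √(1 - 1/t)`. -/
noncomputable def tenTheta (t : ℝ) : ℝ := artanh (Real.sqrt (1 - 1 / t))

/-- The piecewise function `g` with `f(t) = (8/(33 t²)) g(t)` for `t ≥ 1`. -/
noncomputable def tenG (t : ℝ) : ℝ :=
  if t < 2 then 4 * Real.log t
  else if t < 3 then 12 * Real.log t - 8 * Real.log 2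
  else if t < 4 then 15 * Real.log t - 8 * Real.log 2 - 3 * Real.log 3
  else if t < 16 / 3 then
    16 * Real.log t - 10 * Real.log 2 - 3 * Real.log 3 - 8 * tenTheta (t / 4)
  else if t < 6 then
    16 * Real.log t - 10 * Real.log 2 - 3 * Real.log 3 - 8 * tenTheta (t / 4)
      - 4 * tenTheta (3 * t / 16)
  else if t < 8 then
    12 * Real.log t - 8 * Real.log 2 + Real.log 3 - 8 * tenTheta (t / 4)
      - 4 * tenTheta (t / 6)
  else if t < 9 then
    10 * Real.log t - 2 * Real.log 2 - Real.log 3 - 8 * tenTheta (t / 4)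
      - 12 * tenTheta (t / 8)
  else if t < 32 / 3 then
    10 * Real.log t - 4 * Real.log 2 - Real.log 3 - 8 * tenTheta (t / 4)
      - 8 * tenTheta (t / 8)
  else if t < 12 then
    10 * Real.log t - 4 * Real.log 2 - Real.log 3 - 8 * tenTheta (t / 4)
      - 8 * tenTheta (t / 8) - 4 * tenTheta (3 * t / 32)
  else if t < 16 then
    9 * Real.log t - 4 * Real.log 2 - 8 * tenTheta (t / 4) - 8 * tenTheta (t / 8)
      - 4 * tenTheta (t / 12)
  else
    9 * Real.log t - 4 * Real.log 2 - Real.log 3 - 8 * tenTheta (t / 4)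
      - 8 * tenTheta (t / 8) - 2 * tenTheta (t / 12)

/-- The slope gap distribution pdf of the balanced ten-tile origami. -/
noncomputable def tenTilePdf (t : ℝ) : ℝ :=
  if t < 1 then 0 else 8 / (33 * t ^ 2) * tenG t

open Filter Set Topology

/-! Near `4/3` and `64/3` the pdf coincides with a single branch built from `log t` and
`θ(t/c)` with `t/c > 1`, all differentiable there. At `16/3` the branch on the right is the
(smooth) branch on the left minus `(32/(33t²)) θ(3t/16)`, a term vanishing at `16/3`. Since
`θ(x) ≥ √(1 - 1/x)/2` is of order `√(x - 1)` as `x → 1⁺`, the right difference quotients of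
that term tend to `+∞`, which is impossible for the difference of two functions differentiable
at `16/3`. -/

lemma not_differentiableAt_of_eventuallyEq_sub {f F G : ℝ → ℝ} {a : ℝ}
    (hF : DifferentiableAt ℝ F a) (hf : f =ᶠ[𝓝[≥] a] F - G)
    (hG : Tendsto (slope G a) (𝓝[>] a) atTop) : ¬ DifferentiableAt ℝ f a := by
  intro hfa
  have hGF : G =ᶠ[𝓝[≥] a] F - f := by
    filter_upwards [hf] with t ht
    simp [ht]
  have hderiv : HasDerivWithinAt G (deriv (F - f) a) (Ioi a) a :=
    ((hF.sub hfa).hasDerivAt.hasDerivWithinAt.congr_of_eventuallyEq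
      (hGF.filter_mono (nhdsWithin_mono a Ioi_subset_Ici_self)) (hGF.eq_of_nhdsWithin self_mem_Ici))
  exact not_tendsto_nhds_of_tendsto_atTop hG _
    ((hasDerivWithinAt_iff_tendsto_slope' self_notMem_Ioi).mp hderiv)

lemma half_le_artanh {s : ℝ} (hs0 : 0 ≤ s) (hs1 : s < 1) : s / 2 ≤ artanh s := by
  have hlog_sub : Real.log (1 - s) ≤ -s := by
    linarith [Real.log_le_sub_one_of_pos (x := 1 - s) (by linarith)]
  have hlog_add : 0 ≤ Real.log (1 + s) := Real.log_nonneg (by linarith)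
  rw [artanh, Real.log_div (by linarith) (by linarith)]
  linarith

lemma differentiableAt_artanh {x : ℝ} (h0 : -1 < x) (h1 : x < 1) :
    DifferentiableAt ℝ artanh x := by
  have hden : 1 - x ≠ 0 := by linarith
  have hquot : (1 + x) / (1 - x) ≠ 0 := div_ne_zero (by linarith) hden
  unfold artanh
  fun_prop (disch := assumption)

lemma sqrt_one_sub_one_div_lt_one {x : ℝ} (hx : 0 < x) : √(1 - 1 / x) < 1 := by
  rw [Real.sqrt_lt' one_pos]
  have : 0 < 1 / x := by positivity
  linarith

lemma one_sub_one_div_pos {x : ℝ} (hx : 1 < x) : 0 < 1 - 1 / x :=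
  sub_pos.2 ((div_lt_one (by linarith)).2 hx)

lemma tenTheta_one : tenTheta 1 = 0 := by
  simp [tenTheta, artanh]

@[fun_prop]
lemma differentiableAt_tenTheta {x : ℝ} (hx : 1 < x) : DifferentiableAt ℝ tenTheta x := by
  have hx0 : x ≠ 0 := by linarith
  have harg : 1 - 1 / x ≠ 0 := (one_sub_one_div_pos hx).ne'
  exact (differentiableAt_artanh (by linarith [Real.sqrt_nonneg (1 - 1 / x)])
    (sqrt_one_sub_one_div_lt_one (by linarith))).comp x (by fun_prop (disch := assumption))

lemma half_sqrt_le_tenTheta {x : ℝ} (hx : 0 < x) : √(1 - 1 / x) / 2 ≤ tenTheta x :=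
  half_le_artanh (Real.sqrt_nonneg _) (sqrt_one_sub_one_div_lt_one hx)

lemma tendsto_slope_tenTheta_one : Tendsto (slope tenTheta 1) (𝓝[>] 1) atTop := by
  have hlower : ∀ x ∈ Ioi (1 : ℝ), (x * √(1 - 1 / x))⁻¹ / 2 ≤ slope tenTheta 1 x := by
    intro x hx
    have hx : 1 < x := hx
    have hsq : √(1 - 1 / x) ^ 2 = 1 - 1 / x := Real.sq_sqrt (one_sub_one_div_pos hx).le
    have hx1 : x - 1 = x * √(1 - 1 / x) ^ 2 := by rw [hsq]; field_simp
    rw [slope_def_field, tenTheta_one, sub_zero]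
    calc (x * √(1 - 1 / x))⁻¹ / 2 = √(1 - 1 / x) / 2 / (x - 1) := by
          rw [hx1]; field_simp
      _ ≤ tenTheta x / (x - 1) :=
          div_le_div_of_nonneg_right (half_sqrt_le_tenTheta (by linarith)) (by linarith)
  have hto_zero : Tendsto (fun x : ℝ => x * √(1 - 1 / x)) (𝓝[>] 1) (𝓝[>] 0) := by
    refine tendsto_nhdsWithin_iff.2 ⟨?_, eventually_nhdsWithin_of_forall fun x (hx : 1 < x) => ?_⟩
    · have hcont : ContinuousAt (fun x : ℝ => x * √(1 - 1 / x)) 1 := by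
        fun_prop (disch := norm_num)
      simpa using hcont.tendsto.mono_left nhdsWithin_le_nhds
    · exact mul_pos (by linarith) (Real.sqrt_pos.2 (one_sub_one_div_pos hx))
  exact tendsto_atTop_mono' _ (eventually_nhdsWithin_of_forall hlower)
    ((tendsto_inv_nhdsGT_zero.comp hto_zero).atTop_div_const two_pos)

lemma tendsto_slope_mul_tenTheta_const_mul {c : ℝ → ℝ} {k : ℝ} (hk : 0 < k)
    (hc : ContinuousAt c k⁻¹) (hc0 : 0 < c k⁻¹) :
    Tendsto (slope (fun t => c t * tenTheta (k * t)) k⁻¹) (𝓝[>] k⁻¹) atTop := by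
  have hscale : Tendsto (fun t => k * t) (𝓝[>] k⁻¹) (𝓝[>] 1) := by
    have := (continuous_const_mul k).continuousWithinAt.tendsto_nhdsWithin
      (x := k⁻¹) (t := Ioi 1) fun t (ht : k⁻¹ < t) => (inv_lt_iff_one_lt_mul₀' hk).1 ht
    rwa [mul_inv_cancel₀ hk.ne'] at this
  have hslope : slope (fun t => c t * tenTheta (k * t)) k⁻¹ =
      fun t => c t * (k * slope tenTheta 1 (k * t)) := by
    funext t
    rcases eq_or_ne t k⁻¹ with rfl | ht
    · simp [mul_inv_cancel₀ hk.ne']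
    · have hkt : k * t - 1 ≠ 0 := by
        intro h
        exact ht (eq_inv_of_mul_eq_one_right (by linarith))
      simp only [slope_def_field, mul_inv_cancel₀ hk.ne', tenTheta_one]
      field_simp
      ring
  rw [hslope]
  exact (hc.tendsto.mono_left nhdsWithin_le_nhds).pos_mul_atTop hc0
    ((tendsto_slope_tenTheta_one.comp hscale).const_mul_atTop hk)

lemma differentiableAt_tenTilePdf_four_thirds : DifferentiableAt ℝ tenTilePdf (4 / 3) := by
  have heq : tenTilePdf =ᶠ[𝓝 (4 / 3)] fun t => 8 / (33 * t ^ 2) * (4 * Real.log t) := by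
    filter_upwards [Ioo_mem_nhds (show (1 : ℝ) < 4 / 3 by norm_num)
      (show (4 / 3 : ℝ) < 2 by norm_num)] with t ⟨ht1, ht2⟩
    rw [tenTilePdf, if_neg (by linarith), tenG, if_pos ht2]
  rw [heq.differentiableAt_iff]
  fun_prop (disch := norm_num)

lemma differentiableAt_tenTilePdf_sixtyFour_thirds :
    DifferentiableAt ℝ tenTilePdf (64 / 3) := by
  have heq : tenTilePdf =ᶠ[𝓝 (64 / 3)] fun t => 8 / (33 * t ^ 2) *
      (9 * Real.log t - 4 * Real.log 2 - Real.log 3 - 8 * tenTheta (t / 4)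
        - 8 * tenTheta (t / 8) - 2 * tenTheta (t / 12)) := by
    filter_upwards [Ioi_mem_nhds (show (16 : ℝ) < 64 / 3 by norm_num)] with t (ht : 16 < t)
    rw [tenTilePdf, tenG]
    repeat rw [if_neg (by linarith)]
  rw [heq.differentiableAt_iff]
  fun_prop (disch := norm_num)

lemma not_differentiableAt_tenTilePdf_sixteen_thirds :
    ¬ DifferentiableAt ℝ tenTilePdf (16 / 3) := by
  have hk : ((3 : ℝ) / 16)⁻¹ = 16 / 3 := by norm_num
  refine not_differentiableAt_of_eventuallyEq_sub
    (F := fun t => 8 / (33 * t ^ 2) *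
      (16 * Real.log t - 10 * Real.log 2 - 3 * Real.log 3 - 8 * tenTheta (t / 4)))
    (G := fun t => 32 / (33 * t ^ 2) * tenTheta (3 / 16 * t)) ?_ ?_ ?_
  · fun_prop (disch := norm_num)
  · filter_upwards [Ico_mem_nhdsGE (show (16 / 3 : ℝ) < 6 by norm_num)] with t ⟨ht1, ht2⟩
    rw [Pi.sub_apply, tenTilePdf, tenG, show 3 * t / 16 = 3 / 16 * t by ring]
    repeat rw [if_neg (by linarith)]
    rw [if_pos ht2]
    ring
  · rw [← hk]
    exact tendsto_slope_mul_tenTheta_const_mul (by norm_num) (by fun_prop (disch := norm_num))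
      (by norm_num)

/-- The ten-tile slope gap pdf is not differentiable at `16/3`, but is differentiable at
`4/3` and at `64/3`. -/
theorem tenTile_differentiability_at_sixteen_thirds :
    ¬ DifferentiableAt ℝ tenTilePdf (16 / 3) ∧
    DifferentiableAt ℝ tenTilePdf (4 / 3) ∧
    DifferentiableAt ℝ tenTilePdf (64 / 3) :=
  ⟨not_differentiableAt_tenTilePdf_sixteen_thirds, differentiableAt_tenTilePdf_four_thirds,
    differentiableAt_tenTilePdf_sixtyFour_thirds⟩
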